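/- arXiv:2009.06867 — 4 statements merged into one kernel-verified Lean document; each statement's English description precedes it below -/
import Mathlib

section
/- Let S be a finite Abelian group with |S| ≥ 3, and let Γ₁, Γ₂ be graphs with u₁v₁ ∈ E(Γ₁) and distinct vertices u₂, v₂ ∈ V(Γ₂). If neither Γ₁ nor Γ₂ is S-connected, then the 2-sum Γ = Γ₁(u₁v₁) ⊕ Γ₂(u₂,v₂) is not S-connected. -/
open Finset

/-- A finite loopless multigraph: each edge `e` has two distinct endpoints
`fst e` and `snd e` (this pair serves as a reference orientation). -/
structure Multigraph (V : Type) (E : Type) where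
  fst : E → V
  snd : E → V
  loopless : ∀ e, fst e ≠ snd e

namespace Multigraph

variable {V E : Type}

/-- The head of edge `e` under the orientation `o` (a Boolean switch per edge). -/
def head (G : Multigraph V E) (o : E → Bool) (e : E) : V :=
  if o e then G.fst e else G.snd e

/-- The tail of edge `e` under the orientation `o`. -/
def tail (G : Multigraph V E) (o : E → Bool) (e : E) : V :=
  if o e then G.snd e else G.fst e

/-- The boundary `∂φ(u)`: sum of `φ` over edges directed out of `u`
minus the sum over edges directed into `u`.  (An edge is directed out of
its tail and into its head.) -/
def boundary [Fintype E] [DecidableEq V] {S : Type} [AddCommGroup S]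
    (G : Multigraph V E) (o : E → Bool) (φ : E → S) (u : V) : S :=
  (∑ e : E, if G.tail o e = u then φ e else 0)
    - ∑ e : E, if G.head o e = u then φ e else 0

/-- `G` is `S`-connected: every zero-sum boundary function is realized by a
nowhere-zero mapping under some orientation. -/
def GroupConnected [Fintype V] [Fintype E] [DecidableEq V]
    (G : Multigraph V E) (S : Type) [AddCommGroup S] : Prop :=
  ∀ β : V → S, ∑ v : V, β v = 0 →
    ∃ (o : E → Bool) (φ : E → S), (∀ e, φ e ≠ 0) ∧ ∀ u, G.boundary o φ u = β u

/-- Degree of a vertex: number of edge-ends at it. -/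
def degree [Fintype E] [DecidableEq V] (G : Multigraph V E) (v : V) : ℕ :=
  (univ.filter fun e => G.fst e = v).card + (univ.filter fun e => G.snd e = v).card

/-- Adjacency via some edge. -/
def Adj (G : Multigraph V E) (u v : V) : Prop :=
  ∃ e, (G.fst e = u ∧ G.snd e = v) ∨ (G.fst e = v ∧ G.snd e = u)

/-- Connectivity of a multigraph. -/
def Connected (G : Multigraph V E) : Prop :=
  Nonempty V ∧ ∀ u v : V, Relation.ReflTransGen G.Adj u v

/-- Delete a set of edges. -/
def deleteEdges (G : Multigraph V E) (F : Set E) : Multigraph V {e : E // e ∉ F} where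
  fst e := G.fst e.1
  snd e := G.snd e.1
  loopless e := G.loopless e.1

/-- `G` has edge-connectivity at least `k`. -/
def EdgeConnAtLeast (G : Multigraph V E) (k : ℕ) : Prop :=
  ∀ F : Finset E, F.card < k → (G.deleteEdges ↑F).Connected

/-- Orientation-free boundary, suitable for groups of exponent 2. -/
def ubnd [Fintype E] [DecidableEq V] {S : Type} [AddCommGroup S]
    (G : Multigraph V E) (φ : E → S) (v : V) : S :=
  ∑ e : E, ((if G.fst e = v then φ e else 0) + (if G.snd e = v then φ e else 0))

/-- The subgraph with vertex set `R` and edge set `F`. -/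
def restrict (G : Multigraph V E) (R : Set V) (F : Set E)
    (hF : ∀ e ∈ F, G.fst e ∈ R ∧ G.snd e ∈ R) : Multigraph R F where
  fst e := ⟨G.fst e.1, (hF e.1 e.2).1⟩
  snd e := ⟨G.snd e.1, (hF e.1 e.2).2⟩
  loopless e h := G.loopless e.1 (congrArg Subtype.val h)

end Multigraph

/-- The identification map used in the 2-sum: `u₂ ↦ u₁ = fst e₀`, `v₂ ↦ v₁ = snd e₀`,
and every other vertex of `Γ₂` maps to itself. -/
def glue {V₁ E₁ V₂ : Type} [DecidableEq V₂] (Γ₁ : Multigraph V₁ E₁) (e₀ : E₁)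
    (u₂ v₂ : V₂) (w : V₂) : V₁ ⊕ {w : V₂ // w ≠ u₂ ∧ w ≠ v₂} :=
  if h : w = u₂ then Sum.inl (Γ₁.fst e₀)
  else if h' : w = v₂ then Sum.inl (Γ₁.snd e₀)
  else Sum.inr ⟨w, h, h'⟩

theorem glue_injective {V₁ E₁ V₂ : Type} [DecidableEq V₂] (Γ₁ : Multigraph V₁ E₁)
    (e₀ : E₁) (u₂ v₂ : V₂) (huv : u₂ ≠ v₂) :
    Function.Injective (glue Γ₁ e₀ u₂ v₂) := by
  intro w w' h
  unfold glue at h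
  split_ifs at h <;> simp_all
  · exact absurd h (Γ₁.loopless e₀)
  · exact absurd h.symm (Γ₁.loopless e₀)

/-- The 2-sum `Γ₁(e₀) ⊕ Γ₂(u₂, v₂)`: delete the edge `e₀` (with ends `u₁ = fst e₀`,
`v₁ = snd e₀`) from `Γ₁`, and identify `u₁` with `u₂` and `v₁` with `v₂`. -/
def Multigraph.twoSum {V₁ E₁ V₂ E₂ : Type} [DecidableEq E₁] [DecidableEq V₂]
    (Γ₁ : Multigraph V₁ E₁) (e₀ : E₁) (Γ₂ : Multigraph V₂ E₂)
    (u₂ v₂ : V₂) (huv : u₂ ≠ v₂) :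
    Multigraph (V₁ ⊕ {w : V₂ // w ≠ u₂ ∧ w ≠ v₂}) ({e : E₁ // e ≠ e₀} ⊕ E₂) where
  fst := Sum.elim (fun e => Sum.inl (Γ₁.fst e.1)) (fun e => glue Γ₁ e₀ u₂ v₂ (Γ₂.fst e))
  snd := Sum.elim (fun e => Sum.inl (Γ₁.snd e.1)) (fun e => glue Γ₁ e₀ u₂ v₂ (Γ₂.snd e))
  loopless := by
    rintro (e | e) h
    · simp only [Sum.elim_inl, Sum.inl.injEq] at h
      exact Γ₁.loopless e.1 h
    · exact Γ₂.loopless e (glue_injective Γ₁ e₀ u₂ v₂ huv h)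

/-!
Take zero-sum boundaries `β₁`, `β₂` that are not realized on `Γ₁`, `Γ₂`, and push both forward
along the vertex identifications to a zero-sum boundary `β` of the 2-sum. Restricted to `Γ₂`, a
nowhere-zero `φ` realizing `β` misses `β₂` only at `u₂` and `v₂`, by some `t` and `-t`. If `t = 0`
it realizes `β₂`; otherwise `φ` on `Γ₁ - e₀`, extended by the value `t` on `e₀`, realizes `β₁`.
-/

section Pushforward

variable {V W S : Type} [Fintype V] [DecidableEq W] [AddCommGroup S]

def pushforward (f : V → W) : (V → S) →+ (W → S) where
  toFun g w := ∑ v with f v = w, g v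
  map_zero' := by ext; simp
  map_add' g h := by ext; simp [sum_add_distrib]

theorem pushforward_apply (f : V → W) (g : V → S) (w : W) :
    pushforward f g w = ∑ v with f v = w, g v := rfl

theorem sum_pushforward [Fintype W] (f : V → W) (g : V → S) :
    ∑ w, pushforward f g w = ∑ v, g v :=
  sum_fiberwise univ f g

theorem pushforward_single [DecidableEq V] (f : V → W) (a : V) (s : S) :
    pushforward f (Pi.single a s) = Pi.single (f a) s := by
  ext w
  simp [pushforward_apply, Pi.single_apply, eq_comm]

theorem pushforward_apply_apply {f : V → W} (hf : f.Injective) (g : V → S) (v : V) :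
    pushforward f g (f v) = g v := by
  rw [pushforward_apply,
    sum_eq_single_of_mem v (by simp) fun b hb hne => absurd (hf (mem_filter.1 hb).2) hne]

theorem pushforward_apply_of_forall_ne {f : V → W} {w : W} (hw : ∀ v, f v ≠ w) (g : V → S) :
    pushforward f g w = 0 := by
  simp [pushforward_apply, hw]

theorem pushforward_injective {f : V → W} (hf : f.Injective) :
    Function.Injective (pushforward f : (V → S) →+ (W → S)) := fun g h hgh =>
  funext fun v => by
    rw [← pushforward_apply_apply hf g, ← pushforward_apply_apply hf h]
    exact congrFun hgh (f v)

end Pushforward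

namespace Multigraph

variable {V E S : Type} [Fintype E] [DecidableEq V] [AddCommGroup S]

theorem boundary_eq_sum_single (G : Multigraph V E) (o : E → Bool) (φ : E → S) :
    G.boundary o φ = ∑ e, (Pi.single (G.tail o e) (φ e) - Pi.single (G.head o e) (φ e)) := by
  ext u
  simp [boundary, Finset.sum_apply, Pi.single_apply, eq_comm, sum_sub_distrib]

theorem sum_boundary [Fintype V] (G : Multigraph V E) (o : E → Bool) (φ : E → S) :
    ∑ v, G.boundary o φ v = 0 := by
  rw [boundary_eq_sum_single]
  simp [Finset.sum_apply, sum_comm (γ := V)]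

end Multigraph

theorem eq_single_sub_single {V S : Type} [Fintype V] [DecidableEq V] [AddCommGroup S]
    {u v : V} (huv : u ≠ v) {g : V → S} (hsum : ∑ w, g w = 0)
    (hg : ∀ w, w ≠ u → w ≠ v → g w = 0) : g = Pi.single u (g u) - Pi.single v (g u) := by
  have hv : g v = -g u := by
    rw [Fintype.sum_eq_add u v huv fun w hw => hg w hw.1 hw.2] at hsum
    exact eq_neg_of_add_eq_zero_right hsum
  ext w
  by_cases hwu : w = u
  · subst hwu; simp [huv]
  by_cases hwv : w = v
  · subst hwv; simp [hwu, hv]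
  simp [hwu, hwv, hg w hwu hwv]

def extendAt {E α : Type} [DecidableEq E] (e₀ : E) (a : α) (g : {e // e ≠ e₀} → α) (e : E) : α :=
  if h : e = e₀ then a else g ⟨e, h⟩

@[simp]
theorem extendAt_self {E α : Type} [DecidableEq E] (e₀ : E) (a : α) (g : {e // e ≠ e₀} → α) :
    extendAt e₀ a g e₀ = a := by
  simp [extendAt]

@[simp]
theorem extendAt_coe {E α : Type} [DecidableEq E] {e₀ : E} (a : α) (g : {e // e ≠ e₀} → α)
    (e : {e // e ≠ e₀}) : extendAt e₀ a g e = g e := by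
  simp [extendAt, e.2]

section TwoSum

variable {V₁ E₁ V₂ E₂ S : Type} [DecidableEq V₂] (Γ₁ : Multigraph V₁ E₁) (e₀ : E₁)
  {u₂ v₂ : V₂}

theorem glue_left : glue Γ₁ e₀ u₂ v₂ u₂ = .inl (Γ₁.fst e₀) := by simp [glue]

theorem glue_right (huv : u₂ ≠ v₂) : glue Γ₁ e₀ u₂ v₂ v₂ = .inl (Γ₁.snd e₀) := by
  simp [glue, huv.symm]

theorem glue_of_ne {w : V₂} (hw : w ≠ u₂ ∧ w ≠ v₂) : glue Γ₁ e₀ u₂ v₂ w = .inr ⟨w, hw⟩ := by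
  simp [glue, hw.1, hw.2]

theorem pushforward_glue_apply_inr [DecidableEq V₁] [Fintype V₂] [AddCommGroup S]
    (huv : u₂ ≠ v₂) (g : V₂ → S) {w : V₂} (hw : w ≠ u₂ ∧ w ≠ v₂) : pushforward (glue Γ₁ e₀ u₂ v₂) g (.inr ⟨w, hw⟩) = g w := by
  rw [← glue_of_ne Γ₁ e₀ hw, pushforward_apply_apply (glue_injective Γ₁ e₀ u₂ v₂ huv)]

variable [Fintype V₁] [Fintype E₁] [Fintype V₂] [Fintype E₂] [DecidableEq V₁] [DecidableEq E₁]
  [AddCommGroup S] (Γ₂ : Multigraph V₂ E₂) (huv : u₂ ≠ v₂)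

/-- The deleted edge `e₀` reappears on both sides, with value `s`: in `Γ₁` directed from
`fst e₀` to `snd e₀`, and in `Γ₂` as a virtual edge from `v₂` to `u₂`; after gluing, the two
copies cancel. -/
theorem boundary_twoSum (o : {e // e ≠ e₀} ⊕ E₂ → Bool) (φ : {e // e ≠ e₀} ⊕ E₂ → S) (s : S) :
    (Γ₁.twoSum e₀ Γ₂ u₂ v₂ huv).boundary o φ =
      pushforward Sum.inl
          (Γ₁.boundary (extendAt e₀ false (o ∘ Sum.inl)) (extendAt e₀ s (φ ∘ Sum.inl)))
        + pushforward (glue Γ₁ e₀ u₂ v₂)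
          (Γ₂.boundary (o ∘ Sum.inr) (φ ∘ Sum.inr) - (Pi.single u₂ s - Pi.single v₂ s)) := by
  simp only [Multigraph.boundary_eq_sum_single, map_sum, map_sub, map_add, pushforward_single,
    Fintype.sum_sum_type, Fintype.sum_eq_add_sum_subtype_ne _ e₀, sum_sub_distrib,
    Multigraph.tail, Multigraph.head, Multigraph.twoSum, Sum.elim_inl, Sum.elim_inr,
    extendAt_self, extendAt_coe, Function.comp_apply, Bool.false_eq_true, ↓reduceIte, apply_ite,
    glue_left, glue_right Γ₁ e₀ huv]
  abel

theorem boundary_right_or_left_of_boundary_twoSum_eq {o : {e // e ≠ e₀} ⊕ E₂ → Bool}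
    {φ : {e // e ≠ e₀} ⊕ E₂ → S} {β₁ : V₁ → S} {β₂ : V₂ → S} (hβ₂ : ∑ w, β₂ w = 0)
    (h : (Γ₁.twoSum e₀ Γ₂ u₂ v₂ huv).boundary o φ =
      pushforward Sum.inl β₁ + pushforward (glue Γ₁ e₀ u₂ v₂) β₂) :
    Γ₂.boundary (o ∘ Sum.inr) (φ ∘ Sum.inr) = β₂ ∨
      ∃ t ≠ 0, Γ₁.boundary (extendAt e₀ false (o ∘ Sum.inl)) (extendAt e₀ t (φ ∘ Sum.inl)) = β₁ := by
  set d := Γ₂.boundary (o ∘ Sum.inr) (φ ∘ Sum.inr) - β₂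
  have hd : d = Pi.single u₂ (d u₂) - Pi.single v₂ (d u₂) := by
    refine eq_single_sub_single huv ?_ fun w hu hv => ?_
    · simp [d, sum_sub_distrib, Multigraph.sum_boundary, hβ₂]
    · have := congrFun h (.inr ⟨w, hu, hv⟩)
      rw [boundary_twoSum (s := 0)] at this
      simpa [d, pushforward_apply_of_forall_ne, pushforward_glue_apply_inr Γ₁ e₀ huv, sub_eq_zero]
        using this
  by_cases ht : d u₂ = 0
  · left
    rw [ht] at hd
    simpa [d, sub_eq_zero] using hd
  · right
    rw [boundary_twoSum (s := d u₂), ← hd, sub_sub_cancel] at h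
    exact ⟨d u₂, ht, pushforward_injective Sum.inl_injective (add_right_cancel h)⟩

end TwoSum

theorem twoSum_not_groupConnected_general {V₁ E₁ V₂ E₂ : Type}
    [Fintype V₁] [Fintype E₁] [DecidableEq V₁] [DecidableEq E₁]
    [Fintype V₂] [Fintype E₂] [DecidableEq V₂]
    (S : Type) [AddCommGroup S]
    (Γ₁ : Multigraph V₁ E₁) (e₀ : E₁) (Γ₂ : Multigraph V₂ E₂)
    (u₂ v₂ : V₂) (huv : u₂ ≠ v₂)
    (h₁ : ¬ Γ₁.GroupConnected S) (h₂ : ¬ Γ₂.GroupConnected S) :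
    ¬ (Γ₁.twoSum e₀ Γ₂ u₂ v₂ huv).GroupConnected S := by
  intro hG
  simp only [Multigraph.GroupConnected] at h₁ h₂
  push Not at h₁ h₂
  obtain ⟨β₁, hs₁, hβ₁⟩ := h₁
  obtain ⟨β₂, hs₂, hβ₂⟩ := h₂
  obtain ⟨o, φ, hφ, hb⟩ :=
    hG (pushforward Sum.inl β₁ + pushforward (glue Γ₁ e₀ u₂ v₂) β₂)
      (by simp only [Pi.add_apply, sum_add_distrib, sum_pushforward, hs₁, hs₂, add_zero])
  rcases boundary_right_or_left_of_boundary_twoSum_eq Γ₁ e₀ Γ₂ huv hs₂ (funext hb) with h | ⟨t, ht, h⟩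
  · obtain ⟨u, hu⟩ := hβ₂ _ _ fun e => hφ (.inr e)
    exact hu (congrFun h u)
  · obtain ⟨x, hx⟩ := hβ₁ (extendAt e₀ false (o ∘ Sum.inl)) (extendAt e₀ t (φ ∘ Sum.inl))
      fun e => if he : e = e₀ then by simpa [he] using ht
        else by simpa [extendAt, he] using hφ (.inl ⟨e, he⟩)
    exact hx (congrFun h x)

/-- if `|S| ≥ 3` and neither `Γ₁` nor `Γ₂` is `S`-connected, then their
2-sum is not `S`-connected. -/
theorem twoSum_not_groupConnected {V₁ E₁ V₂ E₂ : Type}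
    [Fintype V₁] [Fintype E₁] [DecidableEq V₁] [DecidableEq E₁]
    [Fintype V₂] [Fintype E₂] [DecidableEq V₂]
    (S : Type) [AddCommGroup S] [Fintype S] (hS : 3 ≤ Fintype.card S)
    (Γ₁ : Multigraph V₁ E₁) (e₀ : E₁) (Γ₂ : Multigraph V₂ E₂)
    (u₂ v₂ : V₂) (huv : u₂ ≠ v₂)
    (h₁ : ¬ Γ₁.GroupConnected S) (h₂ : ¬ Γ₂.GroupConnected S) :
    ¬ (Γ₁.twoSum e₀ Γ₂ u₂ v₂ huv).GroupConnected S :=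
  twoSum_not_groupConnected_general S Γ₁ e₀ Γ₂ u₂ v₂ huv h₁ h₂
end

section
/- A cycle Cₙ of length n is S-connected if and only if |S| ≥ n+1. -/
open Finset

/-- The cycle `Cₙ` of length `n ≥ 2`: vertices `ZMod n`, with an edge from `i` to `i+1`. -/
def cycleGraph (n : ℕ) [NeZero n] (hn : 2 ≤ n) : Multigraph (ZMod n) (ZMod n) where
  fst := id
  snd := fun i => i + 1
  loopless := by
    intro e h
    haveI : Fact (1 < n) := ⟨hn⟩
    have h0 : e + 0 = e + 1 := by rw [add_zero]; exact h
    exact one_ne_zero ((add_left_cancel h0).symm)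

/-!
Reversing an edge and negating its value does not change the boundary, so on `Cₙ` the
equation `∂φ = β` says `ψ u - ψ (u - 1) = β u` for a nowhere-zero `ψ`. When `β` has zero sum
it has a potential `s`, and the solutions are exactly the translates `s + c`; one of them
avoids `0` iff `s` is not onto `S`. Since every `s : ZMod n → S` is the potential of its own
differences, `Cₙ` is `S`-connected iff no map `ZMod n → S` is surjective, i.e. iff `n < |S|`.
-/

namespace ZMod

variable {n : ℕ} [NeZero n]

theorem eq_of_forall_eq_apply_sub_one {α : Type*} {f : ZMod n → α}
    (h : ∀ u, f u = f (u - 1)) (u v : ZMod n) : f u = f v := by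
  have hnat : ∀ k : ℕ, f k = f 0 := by
    intro k
    induction k with
    | zero => simp
    | succ k ih => rw [h, Nat.cast_succ, add_sub_cancel_right, ih]
  rw [← natCast_zmod_val u, ← natCast_zmod_val v, hnat, hnat]

variable {S : Type*} [AddCommGroup S]

theorem exists_eq_add_const_of_sub_apply_sub_one {f g : ZMod n → S}
    (h : ∀ u, f u - f (u - 1) = g u - g (u - 1)) : ∃ c, ∀ u, f u = g u + c :=
  ⟨f 0 - g 0, fun u => by
    have := eq_of_forall_eq_apply_sub_one (f := f - g)
      (fun u => by simpa only [Pi.sub_apply, sub_eq_sub_iff_sub_eq_sub] using h u) u 0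
    simp only [Pi.sub_apply] at this
    rw [← this, add_sub_cancel]⟩

theorem sum_range_natCast (f : ZMod n → S) :
    ∑ k ∈ range n, f k = ∑ u : ZMod n, f u :=
  Finset.sum_nbij' (fun k => (k : ZMod n)) val (fun _ _ => mem_univ _)
    (fun u _ => mem_range.mpr u.val_lt) (fun _ hk => val_cast_of_lt (mem_range.mp hk))
    (fun u _ => natCast_zmod_val u) (fun _ _ => rfl)

theorem sum_sub_apply_sub_one (f : ZMod n → S) : ∑ u, (f u - f (u - 1)) = 0 := by
  rw [sum_sub_distrib, sub_eq_zero]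
  exact ((Equiv.subRight 1).sum_comp f).symm

theorem exists_sub_apply_sub_one_eq_of_sum_eq_zero {β : ZMod n → S} (hβ : ∑ u, β u = 0) :
    ∃ s : ZMod n → S, ∀ u, s u - s (u - 1) = β u := by
  -- partial sums; the wrap-around step at `u = 0` works because the full sum vanishes
  refine ⟨fun u => ∑ k ∈ range (u.val + 1), β k, fun u => ?_⟩
  rcases eq_or_ne u 0 with rfl | hu
  · obtain ⟨m, rfl⟩ := Nat.exists_eq_succ_of_ne_zero (NeZero.ne n)
    simp only [val_zero, zero_add, range_one, sum_singleton, Nat.cast_zero, zero_sub, val_neg_one,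
      Nat.succ_eq_add_one, sum_range_natCast, hβ, sub_zero]
  · have hpos : 0 < u.val := Nat.pos_of_ne_zero ((val_ne_zero u).mpr hu)
    have hval : (u - 1).val + 1 = u.val := by
      have h1 : (1 : ZMod n).val = 1 := by
        rw [val_one_eq_one_mod, _root_.Nat.mod_eq_of_lt (lt_of_lt_of_le' u.val_lt hpos)]
      rw [val_sub (h1.trans_le hpos), h1]
      omega
    dsimp only
    rw [← hval, sum_range_succ, add_sub_cancel_left, hval, natCast_zmod_val]

end ZMod

namespace Multigraph

variable {V E S : Type} [Fintype E] [DecidableEq V] [AddCommGroup S]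

theorem boundary_eq_boundary_reference (G : Multigraph V E) (o : E → Bool) (φ : E → S) :
    G.boundary o φ = G.boundary (fun _ => false) (fun e => if o e then -φ e else φ e) := by
  funext u
  simp only [boundary, ← sum_sub_distrib]
  refine sum_congr rfl fun e _ => ?_
  simp only [head, tail, Bool.false_eq_true, if_false]
  split_ifs <;> abel

end Multigraph

theorem exists_forall_add_ne_zero_iff_not_surjective {α S : Type*} [AddGroup S] (s : α → S) :
    (∃ c, ∀ u, s u + c ≠ 0) ↔ ¬ Function.Surjective s := by
  constructor
  · rintro ⟨c, hc⟩ hsurj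
    obtain ⟨u, hu⟩ := hsurj (-c)
    exact hc u (by rw [hu, neg_add_cancel])
  · intro h
    obtain ⟨b, hb⟩ := not_forall.mp h
    exact ⟨-b, fun u hu => hb ⟨u, add_neg_eq_zero.mp hu⟩⟩

theorem Fintype.forall_not_surjective_iff_card_lt {α β : Type*} [Fintype α] [Fintype β]
    [Nonempty β] : (∀ f : α → β, ¬ Function.Surjective f) ↔ card α < card β := by
  rw [← not_exists, Function.exists_surjective_iff, Function.Embedding.nonempty_iff_card_le,
    and_iff_right (inferInstanceAs (Nonempty (α → β))), not_le]

section Cycle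

variable {n : ℕ} [NeZero n] {S : Type} [AddCommGroup S]

theorem cycleGraph_boundary_reference (hn : 2 ≤ n) (ψ : ZMod n → S) (u : ZMod n) :
    (cycleGraph n hn).boundary (fun _ => false) ψ u = ψ u - ψ (u - 1) := by
  simp only [Multigraph.boundary, Multigraph.head, Multigraph.tail, cycleGraph, id,
    Bool.false_eq_true, if_false, sum_ite_eq', mem_univ, if_true, ← eq_sub_iff_add_eq]

theorem cycleGraph_groupConnected_iff_forall_exists_add_ne_zero (hn : 2 ≤ n) :
    (cycleGraph n hn).GroupConnected S ↔ ∀ s : ZMod n → S, ∃ c, ∀ u, s u + c ≠ 0 := by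
  constructor
  · intro hconn s
    obtain ⟨o, φ, hφ, hβ⟩ := hconn _ (ZMod.sum_sub_apply_sub_one s)
    obtain ⟨c, hc⟩ := ZMod.exists_eq_add_const_of_sub_apply_sub_one
      (f := fun e => if o e then -φ e else φ e) (g := s) fun u => by
        rw [← hβ, Multigraph.boundary_eq_boundary_reference, cycleGraph_boundary_reference]
    refine ⟨c, fun u => ?_⟩
    rw [← hc u]
    split_ifs
    exacts [neg_ne_zero.mpr (hφ u), hφ u]
  · intro hs β hβ
    obtain ⟨s, hs_sub⟩ := ZMod.exists_sub_apply_sub_one_eq_of_sum_eq_zero hβ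
    obtain ⟨c, hc⟩ := hs s
    refine ⟨fun _ => false, fun u => s u + c, hc, fun u => ?_⟩
    rw [cycleGraph_boundary_reference, add_sub_add_right_eq_sub, hs_sub]

end Cycle

/-- the cycle `Cₙ` is `S`-connected iff `|S| ≥ n + 1`. -/
theorem cycle_groupConnected_iff (n : ℕ) [NeZero n] (hn : 2 ≤ n)
    (S : Type) [AddCommGroup S] [Fintype S] :
    (cycleGraph n hn).GroupConnected S ↔ n + 1 ≤ Fintype.card S := by
  simp only [cycleGraph_groupConnected_iff_forall_exists_add_ne_zero,
    exists_forall_add_ne_zero_iff_not_surjective, Fintype.forall_not_surjective_iff_card_lt,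
    ZMod.card, Nat.succ_le_iff]
end

section
/- Let G = K₄ with any orientation D and let β: V(G) → ℤ₄ be the constant function with value 1 (which is a zero-sum boundary function). Then for any mapping φ: E(G) → ℤ₄∖{0} with ∂φ = β, there exists a vertex v of G such that every edge e incident with v is either directed into v with φ(e) = 1 or directed away from v with φ(e) = 3. -/
/-! Let the out-value of `φ` at `v` along `e` be `φ e` if `e` leaves `v` and `-φ e` if it enters
`v`, so that `∂φ(v)` is the sum of the out-values at `v`. Weigh out-values by the quadratic
character `χ₄` of `ℤ₄` (`χ₄ 1 = 1`, `χ₄ 3 = -1`, `χ₄ 0 = χ₄ 2 = 0`). As `χ₄` is odd, the two ends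
of each edge cancel, so the total weight is `0` and some vertex has nonpositive weight. At a vertex
of degree `3` the three nonzero out-values sum to `1`, so they are `1, 1, 3` or `1, 2, 2`
(weight `1`) or `3, 3, 3` (weight `-3`): at a vertex of nonpositive weight every edge carries
`3 = -1` outwards, i.e. it enters with value `1` or leaves with value `3`. -/

open Finset

/-- The complete graph `K₄` on four vertices. -/
def K4 : Multigraph (Fin 4) {p : Fin 4 × Fin 4 // p.1 < p.2} where
  fst e := e.1.1
  snd e := e.1.2
  loopless e := ne_of_lt e.2

namespace ZMod

theorem eq_neg_one_of_sum_eq_one_of_sum_χ₄_nonpos {a b c : ZMod 4} (ha : a ≠ 0) (hb : b ≠ 0)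
    (hc : c ≠ 0) (h : a + b + c = 1) (hχ : χ₄ a + χ₄ b + χ₄ c ≤ 0) :
    a = -1 ∧ b = -1 ∧ c = -1 := by
  revert a b c
  decide

end ZMod

namespace Multigraph

variable {V E : Type} (G : Multigraph V E) (o : E → Bool)

theorem tail_ne_head (e : E) : G.tail o e ≠ G.head o e := by
  unfold tail head
  split
  · exact (G.loopless e).symm
  · exact G.loopless e

theorem tail_eq_or_head_eq_iff (e : E) (v : V) :
    G.tail o e = v ∨ G.head o e = v ↔ G.fst e = v ∨ G.snd e = v := by
  unfold tail head
  split <;> tauto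

section OutValue

variable [DecidableEq V]

def incidentEdges [Fintype E] (v : V) : Finset E :=
  {e | G.fst e = v ∨ G.snd e = v}

theorem card_incidentEdges [Fintype E] (v : V) :
    #(G.incidentEdges v) = G.degree v := by
  classical
  rw [incidentEdges, filter_or, card_union_of_disjoint]
  · rfl
  · exact disjoint_filter.mpr fun e _ h₁ h₂ => G.loopless e (h₁.trans h₂.symm)

variable {S : Type} [AddCommGroup S] (φ : E → S)

def outValue (v : V) (e : E) : S :=
  (if G.tail o e = v then φ e else 0) - (if G.head o e = v then φ e else 0)

theorem boundary_eq_sum_outValue [Fintype E] (v : V) :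
    G.boundary o φ v = ∑ e, G.outValue o φ v e := by
  simp only [boundary, outValue, sum_sub_distrib]

theorem outValue_eq_zero {v : V} {e : E} (h : ¬(G.fst e = v ∨ G.snd e = v)) :
    G.outValue o φ v e = 0 := by
  rw [← tail_eq_or_head_eq_iff G o, not_or] at h
  simp [outValue, h.1, h.2]

theorem outValue_ne_zero {v : V} {e : E} (h : G.fst e = v ∨ G.snd e = v) (hφ : φ e ≠ 0) :
    G.outValue o φ v e ≠ 0 := by
  rw [← tail_eq_or_head_eq_iff G o] at h
  rcases h with h | h
  · simpa [outValue, h, h ▸ (G.tail_ne_head o e).symm] using hφ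
  · simpa [outValue, h, h ▸ G.tail_ne_head o e] using hφ

/-- Every edge contributes `w (φ e)` at its tail and `w (-φ e)` at its head, which cancel
when `w` is odd. -/
theorem sum_sum_outValue_eq_zero [Fintype V] [Fintype E] {T : Type}
    [AddCommGroup T] (w : S → T) (hw₀ : w 0 = 0) (hw : ∀ x, w (-x) = -w x) :
    ∑ v, ∑ e, w (G.outValue o φ v e) = 0 := by
  rw [sum_comm]
  refine sum_eq_zero fun e _ => ?_
  have hsplit : ∀ v, w (G.outValue o φ v e) =
      (if G.tail o e = v then w (φ e) else 0) - (if G.head o e = v then w (φ e) else 0) := by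
    intro v
    by_cases ht : G.tail o e = v <;> by_cases hh : G.head o e = v
    · exact absurd (ht.trans hh.symm) (G.tail_ne_head o e)
    all_goals simp [outValue, ht, hh, hw₀, hw]
  simp only [hsplit, sum_sub_distrib, sum_ite_eq, mem_univ, if_true, sub_self]

theorem sum_comp_outValue [Fintype E] {T : Type} [AddCommMonoid T] (f : S → T) (hf : f 0 = 0)
    (v : V) : ∑ e, f (G.outValue o φ v e) = ∑ e ∈ G.incidentEdges v, f (G.outValue o φ v e) := by
  refine (sum_filter_of_ne fun e _ he => ?_).symm
  by_contra h
  exact he (by rw [G.outValue_eq_zero o φ h, hf])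

theorem head_tail_of_forall_outValue_eq_neg [Fintype E] {v : V} {a : S}
    (h : ∀ e ∈ G.incidentEdges v, G.outValue o φ v e = -a) (e : E) :
    (G.head o e = v → φ e = a) ∧ (G.tail o e = v → φ e = -a) := by
  have hinc : G.tail o e = v ∨ G.head o e = v → G.outValue o φ v e = -a := fun hv =>
    h e (by simpa [incidentEdges, ← tail_eq_or_head_eq_iff G o] using hv)
  constructor
  · rintro rfl
    simpa [outValue, G.tail_ne_head o e] using hinc (Or.inr rfl)
  · rintro rfl
    simpa [outValue, (G.tail_ne_head o e).symm] using hinc (Or.inl rfl)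

end OutValue

section Cubic

variable [Fintype E] [DecidableEq V]

open ZMod

theorem exists_sum_χ₄_outValue_nonpos [Fintype V] [Nonempty V] (φ : E → ZMod 4) :
    ∃ v, ∑ e, χ₄ (G.outValue o φ v e) ≤ 0 := by
  have htotal := G.sum_sum_outValue_eq_zero o φ χ₄ rfl (by decide)
  obtain ⟨v, -, hv⟩ := exists_le_of_sum_le univ_nonempty (htotal.trans sum_const_zero.symm).le
  exact ⟨v, hv⟩

theorem outValue_eq_neg_one_of_sum_χ₄_nonpos {φ : E → ZMod 4} {v : V} (hdeg : G.degree v = 3)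
    (hφ : ∀ e, φ e ≠ 0) (hb : G.boundary o φ v = 1) (hχ : ∑ e, χ₄ (G.outValue o φ v e) ≤ 0) :
    ∀ e ∈ G.incidentEdges v, G.outValue o φ v e = -1 := by
  classical
  obtain ⟨x, y, z, hxy, hxz, hyz, hxyz⟩ := card_eq_three.mp ((G.card_incidentEdges v).trans hdeg)
  have hne : ∀ e ∈ G.incidentEdges v, G.outValue o φ v e ≠ 0 := fun e he =>
    G.outValue_ne_zero o φ (mem_filter.mp he).2 (hφ e)
  rw [boundary_eq_sum_outValue, G.sum_comp_outValue o φ (fun x => x) rfl] at hb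
  rw [G.sum_comp_outValue o φ χ₄ rfl] at hχ
  rw [hxyz] at hne ⊢
  simp only [hxyz, sum_insert, sum_singleton, mem_insert, mem_singleton, hxy, hxz, hyz,
    not_false_eq_true, or_self] at hb hχ
  simp only [mem_insert, mem_singleton, forall_eq_or_imp, forall_eq] at hne ⊢
  rw [← add_assoc] at hb hχ
  exact eq_neg_one_of_sum_eq_one_of_sum_χ₄_nonpos hne.1 hne.2.1 hne.2.2 hb hχ

end Cubic

end Multigraph

theorem K4_degree (v : Fin 4) : K4.degree v = 3 := by
  revert v
  decide

/-- for any orientation and nowhere-zero `φ : E(K₄) → ℤ₄` whose boundary is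
the constant boundary function `1`, some vertex `v` has all its incident edges either
directed into `v` with value `1` or directed away from `v` with value `3`. -/
theorem K4_constant_one_boundary (o : {p : Fin 4 × Fin 4 // p.1 < p.2} → Bool)
    (φ : {p : Fin 4 × Fin 4 // p.1 < p.2} → ZMod 4) (hφ : ∀ e, φ e ≠ 0)
    (hb : ∀ u : Fin 4, K4.boundary o φ u = 1) :
    ∃ v : Fin 4, ∀ e, (K4.head o e = v → φ e = 1) ∧ (K4.tail o e = v → φ e = 3) := by
  obtain ⟨v, hv⟩ := K4.exists_sum_χ₄_outValue_nonpos o φ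
  have hout := K4.outValue_eq_neg_one_of_sum_χ₄_nonpos o (K4_degree v) hφ (hb v) hv
  exact ⟨v, K4.head_tail_of_forall_outValue_eq_neg o φ hout⟩
end

section
/- The complete graph K₄ is ℤ₂²-connected. -/
open Finset

section Aux

abbrev ZG := ZMod 2 × ZMod 2
abbrev K4E := {p : Fin 4 × Fin 4 // p.1 < p.2}

def ke01 : K4E := ⟨(0,1), by decide⟩
def ke02 : K4E := ⟨(0,2), by decide⟩
def ke03 : K4E := ⟨(0,3), by decide⟩
def ke12 : K4E := ⟨(1,2), by decide⟩
def ke13 : K4E := ⟨(1,3), by decide⟩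
def ke23 : K4E := ⟨(2,3), by decide⟩

lemma univK4E : (Finset.univ : Finset K4E) = {ke01, ke02, ke03, ke12, ke13, ke23} := by decide

lemma sumK4E (f : K4E → ZG) :
    ∑ e : K4E, f e = f ke01 + f ke02 + f ke03 + f ke12 + f ke13 + f ke23 := by
  rw [univK4E]
  simp [Finset.sum_insert, ke01, ke02, ke03, ke12, ke13, ke23]
  abel

lemma ex3 : ∀ s : ZG, ∃ p q r : ZG, p ≠ 0 ∧ q ≠ 0 ∧ r ≠ 0 ∧ p + q + r = s := by decide
lemma exNe : ∀ x y : ZG, ∃ z : ZG, z ≠ 0 ∧ z ≠ x ∧ z ≠ y := by decide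
lemma addne : ∀ x z : ZG, z ≠ x → x + z ≠ 0 := by decide
lemma zneg : ∀ a : ZG, -a = a := by decide
lemma zdbl : ∀ a : ZG, a + a = 0 := by decide

end Aux

/-- `K₄` is `ℤ₂²`-connected. -/
theorem K4_Z22_connected : K4.GroupConnected (ZMod 2 × ZMod 2) := by
  intro β hβ
  obtain ⟨p, q, r, hp, hq, hr, hpqr⟩ := ex3 (β 0)
  obtain ⟨r', hr0, hr1, hr2⟩ := exNe (β 1 + p) (β 2 + q)
  refine ⟨fun _ => true, fun e =>
    if e = ke01 then p else if e = ke02 then q else if e = ke03 then r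
    else if e = ke12 then r' else if e = ke13 then β 1 + p + r' else β 2 + q + r',
    ?_, ?_⟩
  · intro e
    dsimp only
    split_ifs <;> first | assumption | (exact addne _ _ (by assumption))
  · have hβ4 : β 0 + β 1 + β 2 + β 3 = 0 := by
      simpa [Fin.sum_univ_four] using hβ
    have hβ3 : β 3 = β 0 + β 1 + β 2 := by
      linear_combination zdbl (β 3) - hβ4
    intro u
    rw [Multigraph.boundary, sumK4E, sumK4E]
    fin_cases u <;>
      simp [Multigraph.tail, Multigraph.head, K4, ke01, ke02, ke03, ke12, ke13, ke23,
        hβ3, ← hpqr]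
    · linear_combination -zdbl p - zdbl q - zdbl r
    · linear_combination -zdbl r' - zdbl (β 1)
    · linear_combination -zdbl (β 2)
    · linear_combination zdbl r'
end
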